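/- (Theorem 4, player C, case ω ≠ 1.) The families (P_C(m, k·i₀))_{m ∈ ℕ} are summable for every k ≥ 0, and the absorption probabilities of player C satisfy: P_C(0) := ∑'_{m} P_C(m, 0) = 1/(1 + ω^{i₀} − φ₂), and for every integer k ≥ 2, P_C(k·i₀) := s·∑'_{m} P_C(m, k·i₀) = s·(1 − ω^{i₀})·φ₂^{k−1}/((1 − s)(q − p)(1 + ω^{i₀} − φ₂)). -/
import Mathlib


/-- Player C's survival factor: 0 at the absorbing state 0, `1 - s` at the
multiple function barriers `k·i₀` with `k ≥ 2`, and 1 elsewhere (in particular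
`cC s i₀ i₀ = 1`). -/
noncomputable def cC (s : ℝ) (i₀ : ℕ) (i : ℕ) : ℝ :=
  if i = 0 then 0 else if i₀ ∣ i ∧ i ≠ i₀ then 1 - s else 1

/-- Player C's arrival probabilities: `PC p s i₀ m j` is the probability that
player C, starting at `i₀`, is at state `j` after `m` steps without absorption. -/
noncomputable def PC (p s : ℝ) (i₀ : ℕ) : ℕ → ℕ → ℝ
  | 0, j => if j = i₀ then 1 else 0
  | m + 1, 0 => (1 - p) * cC s i₀ 1 * PC p s i₀ m 1
  | m + 1, j + 1 =>
      p * cC s i₀ j * PC p s i₀ m j + (1 - p) * cC s i₀ (j + 2) * PC p s i₀ m (j + 2)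

lemma cC_nonneg (s : ℝ) (i₀ : ℕ) (hs1 : s ≤ 1) (i : ℕ) : 0 ≤ cC s i₀ i := by
  unfold cC; split_ifs <;> linarith

lemma cC_le_one (s : ℝ) (i₀ : ℕ) (hs : 0 ≤ s) (i : ℕ) : cC s i₀ i ≤ 1 := by
  unfold cC; split_ifs <;> linarith

lemma cC_zero (s : ℝ) (i₀ : ℕ) : cC s i₀ 0 = 0 := by simp [cC]

lemma cC_one (s : ℝ) (i₀ : ℕ) (hi₀ : 2 ≤ i₀) : cC s i₀ 1 = 1 := by
  unfold cC
  rw [if_neg (by omega), if_neg]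
  rintro ⟨h1, -⟩
  have := Nat.le_of_dvd (by omega) h1
  omega

lemma cC_not_dvd (s : ℝ) (i₀ : ℕ) {i : ℕ} (h : ¬ i₀ ∣ i) : cC s i₀ i = 1 := by
  have hi : i ≠ 0 := by rintro rfl; exact h (dvd_zero _)
  unfold cC
  rw [if_neg hi, if_neg (by tauto)]

lemma cC_self (s : ℝ) (i₀ : ℕ) (hi₀ : 2 ≤ i₀) : cC s i₀ i₀ = 1 := by
  unfold cC
  rw [if_neg (by omega), if_neg (by tauto)]

lemma cC_bar (s : ℝ) (i₀ : ℕ) (hi₀ : 2 ≤ i₀) {k : ℕ} (hk : 2 ≤ k) :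
    cC s i₀ (i₀ * k) = 1 - s := by
  unfold cC
  rw [if_neg (by positivity), if_pos ⟨Dvd.intro k rfl, by nlinarith⟩]

lemma PC_nonneg (p s : ℝ) (i₀ : ℕ) (hp : 0 ≤ p) (hp1 : p ≤ 1) (hs1 : s ≤ 1) :
    ∀ m j, 0 ≤ PC p s i₀ m j := by
  intro m
  induction m with
  | zero => intro j; unfold PC; split_ifs <;> norm_num
  | succ m ih =>
    intro j
    match j with
    | 0 =>
      show 0 ≤ (1 - p) * cC s i₀ 1 * PC p s i₀ m 1
      exact mul_nonneg (mul_nonneg (by linarith) (cC_nonneg s i₀ hs1 1)) (ih 1)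
    | j + 1 =>
      show 0 ≤ p * cC s i₀ j * PC p s i₀ m j + (1 - p) * cC s i₀ (j + 2) * PC p s i₀ m (j + 2)
      exact add_nonneg
        (mul_nonneg (mul_nonneg (by linarith) (cC_nonneg s i₀ hs1 j)) (ih j))
        (mul_nonneg (mul_nonneg (by linarith) (cC_nonneg s i₀ hs1 (j+2))) (ih (j+2)))

lemma PC_bound (p s : ℝ) (i₀ : ℕ) (hp : 0 < p) (hp1 : p < 1) (hs : 0 ≤ s) (hs1 : s ≤ 1) :
    ∀ m j, (Real.sqrt (p / (1 - p))) ^ i₀ * PC p s i₀ m j ≤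
      (2 * (1 - p) * Real.sqrt (p / (1 - p))) ^ m * (Real.sqrt (p / (1 - p))) ^ j := by
  set t := Real.sqrt (p / (1 - p)) with ht
  have hq : (0:ℝ) < 1 - p := by linarith
  have ht0 : 0 < t := Real.sqrt_pos.mpr (by positivity)
  have ht2 : (1 - p) * t ^ 2 = p := by
    rw [Real.sq_sqrt (by positivity)]; field_simp
  set r := 2 * (1 - p) * t with hr
  have hr0 : 0 < r := by positivity
  intro m
  induction m with
  | zero =>
    intro j
    show t ^ i₀ * (if j = i₀ then (1:ℝ) else 0) ≤ 1 * t ^ j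
    split_ifs with h
    · subst h; simp
    · simp; positivity
  | succ m ih =>
    intro j
    match j with
    | 0 =>
      show t ^ i₀ * ((1 - p) * cC s i₀ 1 * PC p s i₀ m 1) ≤ r ^ (m+1) * t ^ 0
      have h1 : t ^ i₀ * PC p s i₀ m 1 ≤ r ^ m * t ^ 1 := ih 1
      have hc1 : cC s i₀ 1 ≤ 1 := cC_le_one s i₀ hs 1
      have hc0 : 0 ≤ cC s i₀ 1 := cC_nonneg s i₀ hs1 1
      have hPC := PC_nonneg p s i₀ hp.le hp1.le hs1 m 1
      have hrm : (0:ℝ) ≤ r ^ m := by positivity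
      calc t ^ i₀ * ((1 - p) * cC s i₀ 1 * PC p s i₀ m 1)
          = (1 - p) * cC s i₀ 1 * (t ^ i₀ * PC p s i₀ m 1) := by ring
        _ ≤ (1 - p) * 1 * (r ^ m * t ^ 1) := by
            apply mul_le_mul (by nlinarith) h1 (by positivity) (by positivity)
        _ = r ^ m * ((1 - p) * t) := by ring
        _ ≤ r ^ m * (2 * ((1 - p) * t)) := by
            have h := mul_nonneg (pow_nonneg hr0.le m) (mul_nonneg hq.le ht0.le)
            nlinarith [h]
        _ = r ^ (m+1) * t ^ 0 := by rw [pow_succ, hr]; ring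
    | j + 1 =>
      show t ^ i₀ * (p * cC s i₀ j * PC p s i₀ m j
            + (1 - p) * cC s i₀ (j+2) * PC p s i₀ m (j+2)) ≤ r ^ (m+1) * t ^ (j+1)
      have h1 : t ^ i₀ * PC p s i₀ m j ≤ r ^ m * t ^ j := ih j
      have h2 : t ^ i₀ * PC p s i₀ m (j+2) ≤ r ^ m * t ^ (j+2) := ih (j+2)
      have hcj1 : cC s i₀ j ≤ 1 := cC_le_one s i₀ hs j
      have hcj0 : 0 ≤ cC s i₀ j := cC_nonneg s i₀ hs1 j
      have hck1 : cC s i₀ (j+2) ≤ 1 := cC_le_one s i₀ hs (j+2)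
      have hck0 : 0 ≤ cC s i₀ (j+2) := cC_nonneg s i₀ hs1 (j+2)
      have hPj := PC_nonneg p s i₀ hp.le hp1.le hs1 m j
      have hPk := PC_nonneg p s i₀ hp.le hp1.le hs1 m (j+2)
      have hti : (0:ℝ) < t ^ i₀ := by positivity
      have key : p * (r ^ m * t ^ j) + (1 - p) * (r ^ m * t ^ (j+2)) = r ^ (m+1) * t ^ (j+1) := by
        linear_combination (-(r ^ m * t ^ j * t)) * hr + (-(r ^ m * t ^ j)) * ht2
      calc t ^ i₀ * (p * cC s i₀ j * PC p s i₀ m j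
            + (1 - p) * cC s i₀ (j+2) * PC p s i₀ m (j+2))
          = p * cC s i₀ j * (t ^ i₀ * PC p s i₀ m j)
            + (1 - p) * cC s i₀ (j+2) * (t ^ i₀ * PC p s i₀ m (j+2)) := by ring
        _ ≤ p * 1 * (r ^ m * t ^ j) + (1 - p) * 1 * (r ^ m * t ^ (j+2)) := by
            apply add_le_add
            · apply mul_le_mul (by nlinarith) h1 (by positivity) (by positivity)
            · apply mul_le_mul (by nlinarith) h2 (by positivity) (by positivity)
        _ = r ^ (m+1) * t ^ (j+1) := by rw [← key]; ring

lemma PC_summable (p s : ℝ) (i₀ : ℕ) (hp : 0 < p) (hp1 : p < 1) (hp2 : p ≠ 1/2)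
    (hs : 0 ≤ s) (hs1 : s ≤ 1) (j : ℕ) :
    Summable (fun m : ℕ => PC p s i₀ m j) := by
  set t := Real.sqrt (p / (1 - p)) with ht
  have hq : (0:ℝ) < 1 - p := by linarith
  have ht0 : 0 < t := Real.sqrt_pos.mpr (by positivity)
  have ht2 : (1 - p) * t ^ 2 = p := by
    rw [Real.sq_sqrt (by positivity)]; field_simp
  set r := 2 * (1 - p) * t with hr
  have hr0 : 0 < r := by positivity
  have hr1 : r < 1 := by
    have hrsq : r ^ 2 = 4 * p * (1 - p) := by
      rw [hr]; nlinarith [ht2]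
    have hne : 2 * p - 1 ≠ 0 := by intro h; apply hp2; linarith
    have h2 : (0:ℝ) < (2*p-1)^2 := by rcases hne.lt_or_gt with h|h <;> nlinarith
    nlinarith [h2, hrsq]
  have hsum : Summable (fun m : ℕ => (t ^ j / t ^ i₀) * r ^ m) :=
    (summable_geometric_of_lt_one hr0.le hr1).mul_left _
  refine Summable.of_nonneg_of_le (fun m => PC_nonneg p s i₀ hp.le hp1.le hs1 m j)
    (fun m => ?_) hsum
  have hb := PC_bound p s i₀ hp hp1 hs hs1 m j
  rw [div_mul_eq_mul_div, le_div_iff₀ (by positivity)]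
  calc PC p s i₀ m j * t ^ i₀ = t ^ i₀ * PC p s i₀ m j := by ring
    _ ≤ r ^ m * t ^ j := hb
    _ = t ^ j * r ^ m := by ring

lemma cC_le_i₀ (s : ℝ) (i₀ : ℕ) (hi₀ : 2 ≤ i₀) {i : ℕ} (h1 : 1 ≤ i) (h2 : i ≤ i₀) :
    cC s i₀ i = 1 := by
  rcases eq_or_lt_of_le h2 with h | h
  · rw [h]; exact cC_self s i₀ hi₀
  · refine cC_not_dvd s i₀ (fun hd => ?_)
    have := Nat.le_of_dvd (by omega) hd
    omega

/-- Candidate closed-form Green function for player C. -/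
noncomputable def Ghat (ω u φ c V G0 : ℝ) (i₀ : ℕ) (j : ℕ) : ℝ :=
  if j = 0 then G0
  else if j ≤ i₀ then c * (1 - ω ^ j)
  else if j % i₀ = 0 then V * φ ^ (j / i₀ - 2)
  else φ ^ (j / i₀ - 1) * (c * (ω ^ (j % i₀) - u) + c * φ * (1 - ω ^ (j % i₀)))

lemma Ghat_zero (ω u φ c V G0 : ℝ) (i₀ : ℕ) : Ghat ω u φ c V G0 i₀ 0 = G0 := by
  simp [Ghat]

lemma Ghat_I (ω u φ c V G0 : ℝ) (i₀ : ℕ) {j : ℕ} (h1 : 1 ≤ j) (h2 : j ≤ i₀) :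
    Ghat ω u φ c V G0 i₀ j = c * (1 - ω ^ j) := by
  unfold Ghat; rw [if_neg (by omega), if_pos h2]

lemma Ghat_bar (ω u φ c V G0 : ℝ) {i₀ : ℕ} (hi₀ : 1 ≤ i₀) {k : ℕ} (hk : 2 ≤ k) :
    Ghat ω u φ c V G0 i₀ (i₀ * k) = V * φ ^ (k - 2) := by
  have h2 : i₀ * 2 ≤ i₀ * k := Nat.mul_le_mul_left _ hk
  unfold Ghat
  rw [if_neg (by omega), if_neg (by omega), if_pos (Nat.mul_mod_right i₀ k),
    Nat.mul_div_cancel_left k (by omega)]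

lemma Ghat_blk (ω u φ c V G0 : ℝ) {i₀ : ℕ} {k x : ℕ} (hk : 1 ≤ k) (hx1 : 1 ≤ x)
    (hx2 : x < i₀) :
    Ghat ω u φ c V G0 i₀ (i₀ * k + x) =
      φ ^ (k - 1) * (c * (ω ^ x - u) + c * φ * (1 - ω ^ x)) := by
  have h1 : i₀ * 1 ≤ i₀ * k := Nat.mul_le_mul_left _ hk
  have hmod : (i₀ * k + x) % i₀ = x := by
    rw [Nat.mul_add_mod, Nat.mod_eq_of_lt hx2]
  have hdiv : (i₀ * k + x) / i₀ = k := by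
    rw [Nat.mul_add_div (by omega), Nat.div_eq_of_lt hx2]; omega
  unfold Ghat
  rw [if_neg (by omega), if_neg (by omega), if_neg (by omega), hmod, hdiv]
lemma Ghat_rec (p s ω u φ c V G0 : ℝ) (i₀ : ℕ) (hi₀ : 2 ≤ i₀)
    (hr1 : (1 - p) * ω = p) (hu : u = ω ^ i₀)
    (hRN : c * ((1 - p) - p) * (1 + u - φ) = 1)
    (hsV : (1 - s) * V = c * φ * (1 - u))
    (hs1 : (1 : ℝ) - s ≠ 0)
    (hID : φ * (u - 1) = (1 - s) * ((p - (1 - p)) * (u + φ ^ 2) + 2 * φ * ((1 - p) * u - p)))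
    (j : ℕ) :
    Ghat ω u φ c V G0 i₀ (j + 1) =
      (if j + 1 = i₀ then (1:ℝ) else 0) + p * cC s i₀ j * Ghat ω u φ c V G0 i₀ j
        + (1 - p) * cC s i₀ (j + 2) * Ghat ω u φ c V G0 i₀ (j + 2) := by
  rcases Nat.eq_zero_or_pos j with rfl | hj1
  · -- j = 0, J = 1
    rw [Ghat_I _ _ _ _ _ _ _ le_rfl (by omega), Ghat_zero, cC_zero,
      Ghat_I _ _ _ _ _ _ _ (by omega) hi₀,
      cC_le_i₀ s i₀ hi₀ (by omega) hi₀, if_neg (by omega)]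
    linear_combination (c * (ω - 1)) * hr1
  rcases lt_trichotomy (j + 1) i₀ with hJ | hJ | hJ
  · -- case (b): interior of region I
    rw [if_neg (by omega), Ghat_I _ _ _ _ _ _ _ (by omega) (by omega),
        Ghat_I _ _ _ _ _ _ _ hj1 (by omega), Ghat_I _ _ _ _ _ _ _ (by omega) (by omega),
        cC_le_i₀ s i₀ hi₀ hj1 (by omega), cC_le_i₀ s i₀ hi₀ (by omega) (by omega)]
    linear_combination (c * ω ^ j * (ω - 1)) * hr1
  · -- case (c): J = i₀, the source site
    have hw1 : ω ^ j * ω = u := by rw [hu, ← hJ]; ring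
    have hidx : j + 2 = i₀ * 1 + 1 := by omega
    have hcR : cC s i₀ (j + 2) = 1 := by
      refine cC_not_dvd s i₀ (fun hd => ?_)
      rw [hidx, Nat.mul_one] at hd
      have : i₀ ∣ 1 := (Nat.dvd_add_right (dvd_refl i₀)).mp hd
      have := Nat.le_of_dvd one_pos this
      omega
    rw [if_pos hJ, Ghat_I _ _ _ _ _ _ _ (by omega) (by omega),
        Ghat_I _ _ _ _ _ _ _ hj1 (by omega),
        cC_le_i₀ s i₀ hi₀ hj1 (by omega), hcR, hidx,
        Ghat_blk _ _ _ _ _ _ le_rfl le_rfl (by omega)]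
    linear_combination (c * (φ - 1 - ω ^ j)) * hr1 + (-(c * p)) * hw1 + hRN
  · -- J > i₀
    obtain ⟨k, x, hx2, hJeq⟩ : ∃ k x, x < i₀ ∧ i₀ * k + x = j + 1 :=
      ⟨(j+1)/i₀, (j+1)%i₀, Nat.mod_lt _ (by omega), Nat.div_add_mod _ _⟩
    have hk1 : 1 ≤ k := by
      rcases Nat.eq_zero_or_pos k with rfl | h
      · rw [Nat.mul_zero] at hJeq; omega
      · exact h
    rcases Nat.eq_zero_or_pos x with rfl | hx1
    · -- case (f): J = i₀ * k is a barrier, k ≥ 2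
      have hk2 : 2 ≤ k := by
        have : k ≠ 1 := by intro h; rw [h, Nat.mul_one] at hJeq; omega
        omega
      obtain ⟨l, rfl⟩ : ∃ l, k = l + 2 := ⟨k - 2, by omega⟩
      have hmul : i₀ * (l + 2) = i₀ * l + i₀ + i₀ := by ring
      have hmul1 : i₀ * (l + 1) = i₀ * l + i₀ := by ring
      have hidxL : j = i₀ * (l + 1) + (i₀ - 1) := by omega
      have hidxR : j + 2 = i₀ * (l + 2) + 1 := by omega
      have hw1 : ω ^ (i₀ - 1) * ω = u := by
        rw [hu, ← pow_succ]; congr 1; omega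
      have hcL : cC s i₀ j = 1 := by
        refine cC_not_dvd s i₀ (fun hd => ?_)
        rw [hidxL] at hd
        have : i₀ ∣ (i₀ - 1) := (Nat.dvd_add_right ⟨l + 1, rfl⟩).mp hd
        have := Nat.le_of_dvd (by omega) this
        omega
      have hcR : cC s i₀ (j + 2) = 1 := by
        refine cC_not_dvd s i₀ (fun hd => ?_)
        rw [hidxR] at hd
        have : i₀ ∣ 1 := (Nat.dvd_add_right ⟨l + 2, rfl⟩).mp hd
        have := Nat.le_of_dvd one_pos this
        omega
      have hf : V = p * (c * (ω ^ (i₀ - 1) - u) + c * φ * (1 - ω ^ (i₀ - 1)))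
          + (1 - p) * φ * (c * (ω ^ 1 - u) + c * φ * (1 - ω ^ 1)) := by
        apply mul_left_cancel₀ hs1
        linear_combination hsV + (-c) * hID
          + (-(c * (1 - s) * (φ - ω ^ (i₀ - 1) + φ * ω ^ (i₀ - 1) - φ ^ 2))) * hr1
          + (-(c * (1 - s) * (1 - p) * (1 - φ))) * hw1
      rw [if_neg (by omega), hcL, hcR, show j + 1 = i₀ * (l + 2) by omega,
        Ghat_bar _ _ _ _ _ _ (by omega) (by omega), hidxR,
        Ghat_blk _ _ _ _ _ _ (by omega) (by omega) (by omega), hidxL,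
        Ghat_blk _ _ _ _ _ _ (by omega) (by omega) (by omega)]
      simp only [Nat.add_sub_cancel, show l + 2 - 1 = l + 1 from rfl]
      linear_combination (φ ^ l) * hf
    · -- case (g): J = i₀ * k + x, 1 ≤ x < i₀
      obtain ⟨y, rfl⟩ : ∃ y, x = y + 1 := ⟨x - 1, by omega⟩
      have hGJ : Ghat ω u φ c V G0 i₀ (j + 1)
          = φ ^ (k - 1) * (c * (ω ^ (y+1) - u) + c * φ * (1 - ω ^ (y+1))) := by
        rw [← hJeq]; exact Ghat_blk _ _ _ _ _ _ hk1 (by omega) (by omega)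
      rw [if_neg (by omega), hGJ]
      rcases eq_or_lt_of_le (show y + 2 ≤ i₀ by omega) with hyR | hyR
      · -- right neighbour is the barrier i₀ * (k+1)
        have hmul : i₀ * (k + 1) = i₀ * k + i₀ := by ring
        have hidxR : j + 2 = i₀ * (k + 1) := by omega
        have hw2 : ω ^ y * ω * ω = u := by
          rw [hu, show i₀ = y + 2 from by omega]; ring
        have hcR : cC s i₀ (j + 2) = 1 - s := by
          rw [hidxR]; exact cC_bar s i₀ hi₀ (by omega)
        have hk12 : k + 1 - 2 = k - 1 := by omega
        rw [hcR, hidxR, Ghat_bar _ _ _ _ _ _ (by omega) (by omega), hk12]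
        -- left neighbour
        rcases Nat.eq_zero_or_pos y with rfl | hy1
        · -- x = 1 : left neighbour is i₀ * k
          have hidxL : j = i₀ * k := by omega
          rcases eq_or_lt_of_le hk1 with hk1' | hk2
          · -- k = 1 : left neighbour is the source i₀ (not a barrier)
            rw [hidxL, ← hk1', Nat.mul_one] at *
            rw [cC_le_i₀ s i₀ hi₀ (by omega) le_rfl,
              Ghat_I _ _ _ _ _ _ _ (by omega) le_rfl, ← hu]
            norm_num
            linear_combination (-(c * (1 - φ) * (ω - 1))) * hr1
              + (c * (1 - φ) * (1 - p)) * hw2 + (-(1 - p)) * hsV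
          · -- k ≥ 2 : left neighbour is a barrier
            obtain ⟨l, rfl⟩ : ∃ l, k = l + 2 := ⟨k - 2, by omega⟩
            have hcL : cC s i₀ j = 1 - s := by
              rw [hidxL]; exact cC_bar s i₀ hi₀ (by omega)
            rw [hcL, hidxL, Ghat_bar _ _ _ _ _ _ (by omega) (by omega)]
            simp only [Nat.add_sub_cancel, show l + 2 - 1 = l + 1 from rfl]
            linear_combination (φ ^ (l + 1) * (-(c * (1 - φ) * (ω - 1)))) * hr1
              + (-(φ ^ l * (p + (1 - p) * φ))) * hsV
              + ((1 - p) * φ ^ (l + 1) * c * (1 - φ)) * hw2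
        · -- y ≥ 1 : left neighbour inside the block
          have hidxL : j = i₀ * k + y := by omega
          have hcL : cC s i₀ j = 1 := by
            refine cC_not_dvd s i₀ (fun hd => ?_)
            rw [hidxL] at hd
            have : i₀ ∣ y := (Nat.dvd_add_right ⟨k, rfl⟩).mp hd
            have := Nat.le_of_dvd (by omega) this
            omega
          rw [hcL, hidxL, Ghat_blk _ _ _ _ _ _ hk1 hy1 (by omega)]
          linear_combination (φ ^ (k - 1)) * ((-(c * (1 - φ) * ω ^ y * (ω - 1))) * hr1)
            + (c * (1 - φ) * (1 - p) * φ ^ (k - 1)) * hw2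
            + (-(1 - p) * φ ^ (k - 1)) * hsV
      · -- right neighbour inside the block
        have hidxR : j + 2 = i₀ * k + (y + 2) := by omega
        have hcR : cC s i₀ (j + 2) = 1 := by
          refine cC_not_dvd s i₀ (fun hd => ?_)
          rw [hidxR] at hd
          have : i₀ ∣ (y + 2) := (Nat.dvd_add_right ⟨k, rfl⟩).mp hd
          have := Nat.le_of_dvd (by omega) this
          omega
        rw [hcR, hidxR, Ghat_blk _ _ _ _ _ _ hk1 (by omega) hyR]
        rcases Nat.eq_zero_or_pos y with rfl | hy1
        · -- x = 1 : left neighbour is i₀ * k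
          have hidxL : j = i₀ * k := by omega
          rcases eq_or_lt_of_le hk1 with hk1' | hk2
          · -- k = 1
            rw [hidxL, ← hk1', Nat.mul_one] at *
            rw [cC_le_i₀ s i₀ hi₀ (by omega) le_rfl,
              Ghat_I _ _ _ _ _ _ _ (by omega) le_rfl, ← hu]
            norm_num
            linear_combination (-(c * (1 - φ) * (ω - 1))) * hr1
          · -- k ≥ 2 : left neighbour barrier
            obtain ⟨l, rfl⟩ : ∃ l, k = l + 2 := ⟨k - 2, by omega⟩
            have hcL : cC s i₀ j = 1 - s := by
              rw [hidxL]; exact cC_bar s i₀ hi₀ (by omega)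
            rw [hcL, hidxL, Ghat_bar _ _ _ _ _ _ (by omega) (by omega)]
            simp only [Nat.add_sub_cancel, show l + 2 - 1 = l + 1 from rfl]
            linear_combination (φ ^ (l + 1) * (-(c * (1 - φ) * (ω - 1)))) * hr1
              + (-(p * φ ^ l)) * hsV
        · -- y ≥ 1 : left neighbour inside the block
          have hidxL : j = i₀ * k + y := by omega
          have hcL : cC s i₀ j = 1 := by
            refine cC_not_dvd s i₀ (fun hd => ?_)
            rw [hidxL] at hd
            have : i₀ ∣ y := (Nat.dvd_add_right ⟨k, rfl⟩).mp hd
            have := Nat.le_of_dvd (by omega) this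
            omega
          rw [hcL, hidxL, Ghat_blk _ _ _ _ _ _ hk1 hy1 (by omega)]
          linear_combination (φ ^ (k - 1)) * ((-(c * (1 - φ) * ω ^ y * (ω - 1))) * hr1)

lemma Ghat_nonneg (ω u φ c V G0 : ℝ) (i₀ : ℕ) (hi₀ : 2 ≤ i₀)
    (hω0 : 0 < ω) (hωne : ω ≠ 1) (hu : u = ω ^ i₀)
    (hφ0 : 0 ≤ φ) (hcω : 0 ≤ c * (1 - ω)) (hV : 0 ≤ V) (hG0 : 0 ≤ G0) :
    ∀ j, 0 ≤ Ghat ω u φ c V G0 i₀ j := by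
  have hIj : ∀ j : ℕ, 1 ≤ j → 0 ≤ c * (1 - ω ^ j) := by
    intro j hj
    rcases lt_or_gt_of_ne hωne with h | h
    · have hc : 0 ≤ c := by nlinarith
      have : ω ^ j ≤ 1 := pow_le_one₀ hω0.le h.le
      nlinarith
    · have hc : c ≤ 0 := by nlinarith
      have : 1 ≤ ω ^ j := one_le_pow₀ h.le
      nlinarith
  have hIu : ∀ x : ℕ, x ≤ i₀ → 0 ≤ c * (ω ^ x - u) := by
    intro x hx
    rcases lt_or_gt_of_ne hωne with h | h
    · have hc : 0 ≤ c := by nlinarith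
      have : ω ^ i₀ ≤ ω ^ x := pow_le_pow_of_le_one hω0.le h.le hx
      rw [hu]; nlinarith
    · have hc : c ≤ 0 := by nlinarith
      have : ω ^ x ≤ ω ^ i₀ := pow_le_pow_right₀ h.le hx
      rw [hu]; nlinarith
  intro j
  unfold Ghat
  split_ifs with h1 h2 h3
  · exact hG0
  · exact hIj j (by omega)
  · exact mul_nonneg hV (pow_nonneg hφ0 _)
  · have hxlt : j % i₀ < i₀ := Nat.mod_lt _ (by omega)
    have hx1 : 1 ≤ j % i₀ := by omega
    have h4 := hIu (j % i₀) hxlt.le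
    have h5 := hIj (j % i₀) hx1
    have h6 : 0 ≤ c * φ * (1 - ω ^ (j % i₀)) := by nlinarith
    exact mul_nonneg (pow_nonneg hφ0 _) (by nlinarith)

lemma Ghat_le_bound (ω u φ c V G0 : ℝ) (i₀ : ℕ) (hi₀ : 2 ≤ i₀)
    (hω0 : 0 < ω) (hωne : ω ≠ 1) (hu : u = ω ^ i₀)
    (hφ0 : 0 ≤ φ) (hφ1 : φ ≤ 1) (hcω : 0 ≤ c * (1 - ω))
    (hs0 : 0 ≤ s') (hs1 : s' < 1) (hsV : (1 - s') * V = c * φ * (1 - u)) :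
    ∀ j, i₀ < j → Ghat ω u φ c V G0 i₀ j ≤ (c * (1 - u) / (1 - s')) * φ ^ (j / i₀ - 1) := by
  have hIj : ∀ j : ℕ, 1 ≤ j → 0 ≤ c * (1 - ω ^ j) := by
    intro j hj
    rcases lt_or_gt_of_ne hωne with h | h
    · have hc : 0 ≤ c := by nlinarith
      have : ω ^ j ≤ 1 := pow_le_one₀ hω0.le h.le
      nlinarith
    · have hc : c ≤ 0 := by nlinarith
      have : 1 ≤ ω ^ j := one_le_pow₀ h.le
      nlinarith
  have hcu : 0 ≤ c * (1 - u) := hu ▸ hIj i₀ (by omega)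
  have hMle : c * (1 - u) ≤ c * (1 - u) / (1 - s') := by
    rw [le_div_iff₀ (by linarith)]; nlinarith
  intro j hj
  unfold Ghat
  rw [if_neg (by omega), if_neg (by omega)]
  split_ifs with h3
  · -- barrier : equality
    have hdvd : i₀ ∣ j := Nat.dvd_of_mod_eq_zero h3
    obtain ⟨m, rfl⟩ := hdvd
    have hm2 : 2 ≤ m := by
      rcases m with _ | _ | m
      · rw [Nat.mul_zero] at hj; omega
      · rw [Nat.mul_one] at hj; omega
      · omega
    have hdivm : i₀ * m / i₀ = m := Nat.mul_div_cancel_left m (by omega)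
    rw [hdivm]
    have hVeq : V = c * (1 - u) / (1 - s') * φ := by
      rw [div_mul_eq_mul_div, eq_div_iff (by linarith : (1:ℝ) - s' ≠ 0)]
      linear_combination hsV
    have hm1 : m - 1 = (m - 2) + 1 := by omega
    rw [hVeq, hm1, pow_succ]
    apply le_of_eq
    ring
  · -- block
    have hxlt : j % i₀ < i₀ := Nat.mod_lt _ (by omega)
    have hx1 : 1 ≤ j % i₀ := by omega
    have hf_le : c * (ω ^ (j % i₀) - u) + c * φ * (1 - ω ^ (j % i₀)) ≤ c * (1 - u) := by
      have h5 := hIj (j % i₀) hx1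
      nlinarith
    calc φ ^ (j / i₀ - 1) * (c * (ω ^ (j % i₀) - u) + c * φ * (1 - ω ^ (j % i₀)))
        ≤ φ ^ (j / i₀ - 1) * (c * (1 - u) / (1 - s')) := by
          apply mul_le_mul_of_nonneg_left ?_ (pow_nonneg hφ0 _)
          linarith
      _ = (c * (1 - u) / (1 - s')) * φ ^ (j / i₀ - 1) := by ring

lemma H_eq_zero (p s : ℝ) (i₀ : ℕ) (hp : 0 < p) (hp1 : p < 1) (hs : 0 ≤ s) (hs1 : s ≤ 1)
    (H : ℕ → ℝ)
    (h0 : H 0 = (1 - p) * cC s i₀ 1 * H 1)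
    (hrec : ∀ j : ℕ, H (j + 1) = p * cC s i₀ j * H j + (1 - p) * cC s i₀ (j + 2) * H (j + 2))
    (hnn : ∀ j, 0 ≤ H j)
    (hto : Filter.Tendsto H Filter.atTop (nhds 0)) :
    ∀ j, H j = 0 := by
  have hsub : ∀ j, H (j + 1) ≤ p * H j + (1 - p) * H (j + 2) := by
    intro j
    rw [hrec j]
    have t1 : p * cC s i₀ j * H j ≤ p * H j := by
      nlinarith [mul_nonneg (mul_nonneg hp.le
        (sub_nonneg.mpr (cC_le_one s i₀ hs j))) (hnn j)]
    have t2 : (1 - p) * cC s i₀ (j + 2) * H (j + 2) ≤ (1 - p) * H (j + 2) := by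
      nlinarith [mul_nonneg (mul_nonneg (by linarith : (0:ℝ) ≤ 1 - p)
        (sub_nonneg.mpr (cC_le_one s i₀ hs (j + 2)))) (hnn (j + 2))]
    linarith
  by_cases hinc : ∃ j, H j < H (j + 1)
  · exfalso
    obtain ⟨j₀, hj₀⟩ := hinc
    have step : ∀ j, H j < H (j + 1) → H (j + 1) < H (j + 2) := by
      intro j h
      have h1 := hsub j
      nlinarith [mul_lt_mul_of_pos_left h hp]
    have mono : ∀ n, H (j₀ + n) < H (j₀ + n + 1) := by
      intro n
      induction n with
      | zero => simpa using hj₀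
      | succ n ih => exact step _ ih
    have hge : ∀ n, H (j₀ + 1) ≤ H (j₀ + 1 + n) := by
      intro n
      induction n with
      | zero => simp
      | succ n ih =>
        have h2 := mono (n + 1)
        rw [show j₀ + (n + 1) = j₀ + 1 + n from by omega] at h2
        exact le_trans ih h2.le
    have hpos : 0 < H (j₀ + 1) := lt_of_le_of_lt (hnn j₀) hj₀
    have hev := hto.eventually_lt_const hpos
    rw [Filter.eventually_atTop] at hev
    obtain ⟨N, hN⟩ := hev
    have h1 := hN (max N (j₀ + 1)) (le_max_left _ _)
    have h2 := hge (max N (j₀ + 1) - (j₀ + 1))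
    rw [show j₀ + 1 + (max N (j₀ + 1) - (j₀ + 1)) = max N (j₀ + 1) from by omega] at h2
    linarith
  · push_neg at hinc
    have h1 : H 1 = 0 := by
      have e1 := hrec 0
      rw [cC_zero] at e1
      have hc2 := cC_le_one s i₀ hs 2
      have hc2' := cC_nonneg s i₀ hs1 2
      have h21 := hinc 1
      have hH1 := hnn 1
      have hH2 := hnn 2
      have hle : H 1 ≤ 0 := by
        nlinarith [mul_nonneg (mul_nonneg (by linarith : (0:ℝ) ≤ 1 - p)
          (by linarith : (0:ℝ) ≤ 1 - cC s i₀ 2)) hH2]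
      linarith
    have hall : ∀ j : ℕ, H (j + 1) ≤ H 1 := by
      intro j
      induction j with
      | zero => exact le_rfl
      | succ n ih => exact le_trans (hinc (n + 1)) ih
    intro j
    match j with
    | 0 => rw [h0, h1]; ring
    | j + 1 => exact le_antisymm (h1 ▸ hall j) (hnn (j + 1))

lemma G_zero_eq (p s : ℝ) (i₀ : ℕ) (hp : 0 < p) (hp1 : p < 1) (hp2 : p ≠ 1/2)
    (hs : 0 ≤ s) (hs1 : s ≤ 1) (hi₀ : 2 ≤ i₀) :
    (∑' m : ℕ, PC p s i₀ m 0) = (1 - p) * cC s i₀ 1 * (∑' m : ℕ, PC p s i₀ m 1) := by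
  rw [Summable.tsum_eq_zero_add (PC_summable p s i₀ hp hp1 hp2 hs hs1 0)]
  have h1 : ∀ m : ℕ, PC p s i₀ (m + 1) 0 = (1 - p) * cC s i₀ 1 * PC p s i₀ m 1 :=
    fun m => rfl
  simp only [h1]
  rw [tsum_mul_left]
  have h0 : PC p s i₀ 0 0 = 0 := by
    show (if (0:ℕ) = i₀ then (1:ℝ) else 0) = 0
    rw [if_neg (by omega)]
  rw [h0, zero_add]

lemma G_rec_eq (p s : ℝ) (i₀ : ℕ) (hp : 0 < p) (hp1 : p < 1) (hp2 : p ≠ 1/2)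
    (hs : 0 ≤ s) (hs1 : s ≤ 1) (j : ℕ) :
    (∑' m : ℕ, PC p s i₀ m (j + 1)) = (if j + 1 = i₀ then (1:ℝ) else 0)
      + p * cC s i₀ j * (∑' m : ℕ, PC p s i₀ m j)
      + (1 - p) * cC s i₀ (j + 2) * (∑' m : ℕ, PC p s i₀ m (j + 2)) := by
  rw [Summable.tsum_eq_zero_add (PC_summable p s i₀ hp hp1 hp2 hs hs1 (j + 1))]
  have h1 : ∀ m : ℕ, PC p s i₀ (m + 1) (j + 1)
      = p * cC s i₀ j * PC p s i₀ m j
        + (1 - p) * cC s i₀ (j + 2) * PC p s i₀ m (j + 2) := fun m => rfl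
  simp only [h1]
  rw [Summable.tsum_add ((PC_summable p s i₀ hp hp1 hp2 hs hs1 j).mul_left _)
      ((PC_summable p s i₀ hp hp1 hp2 hs hs1 (j + 2)).mul_left _),
    tsum_mul_left, tsum_mul_left]
  have h0 : PC p s i₀ 0 (j + 1) = if j + 1 = i₀ then (1:ℝ) else 0 := rfl
  rw [h0]; ring

lemma partial_le_G (p s : ℝ) (i₀ : ℕ) (hp : 0 < p) (hp1 : p < 1)
    (hs1 : s ≤ 1) (hi₀ : 2 ≤ i₀) (Gh : ℕ → ℝ) (hGnn : ∀ j, 0 ≤ Gh j)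
    (hG0e : Gh 0 = (1 - p) * cC s i₀ 1 * Gh 1)
    (hGrec : ∀ j : ℕ, Gh (j + 1) = (if j + 1 = i₀ then (1:ℝ) else 0)
      + p * cC s i₀ j * Gh j + (1 - p) * cC s i₀ (j + 2) * Gh (j + 2)) :
    ∀ M j, ∑ m ∈ Finset.range M, PC p s i₀ m j ≤ Gh j := by
  intro M
  induction M with
  | zero => intro j; simpa using hGnn j
  | succ M ih =>
    intro j
    rw [Finset.sum_range_succ']
    match j with
    | 0 =>
      have e : ∀ m : ℕ, PC p s i₀ (m + 1) 0 = (1 - p) * cC s i₀ 1 * PC p s i₀ m 1 :=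
        fun m => rfl
      simp only [e]
      rw [← Finset.mul_sum]
      have h00 : PC p s i₀ 0 0 = 0 := by
        show (if (0:ℕ) = i₀ then (1:ℝ) else 0) = 0
        rw [if_neg (by omega)]
      rw [h00, add_zero, hG0e]
      have hc : 0 ≤ (1 - p) * cC s i₀ 1 := mul_nonneg (by linarith) (cC_nonneg s i₀ hs1 1)
      exact mul_le_mul_of_nonneg_left (ih 1) hc
    | j + 1 =>
      have e : ∀ m : ℕ, PC p s i₀ (m + 1) (j + 1)
          = p * cC s i₀ j * PC p s i₀ m j
            + (1 - p) * cC s i₀ (j + 2) * PC p s i₀ m (j + 2) := fun m => rfl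
      simp only [e]
      rw [Finset.sum_add_distrib, ← Finset.mul_sum, ← Finset.mul_sum]
      have h01 : PC p s i₀ 0 (j + 1) = if j + 1 = i₀ then (1:ℝ) else 0 := rfl
      rw [h01, hGrec j]
      have hc1 : 0 ≤ p * cC s i₀ j := mul_nonneg hp.le (cC_nonneg s i₀ hs1 j)
      have hc2 : 0 ≤ (1 - p) * cC s i₀ (j + 2) :=
        mul_nonneg (by linarith) (cC_nonneg s i₀ hs1 (j + 2))
      have t1 := mul_le_mul_of_nonneg_left (ih j) hc1
      have t2 := mul_le_mul_of_nonneg_left (ih (j + 2)) hc2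
      split_ifs <;> linarith

set_option maxHeartbeats 1000000 in
/-- Theorem 4 of the paper, player C, case `ω ≠ 1`: absorption probabilities. -/
theorem theorem4_playerC_omega_ne_one (p s : ℝ) (i₀ : ℕ)
    (hp : 0 < p) (hp1 : p < 1) (hp2 : p ≠ 1 / 2) (hs : 0 < s) (hs1 : s < 1) (hi₀ : 2 ≤ i₀)
    (q ω τ₁ τ₂ θ φ₂ : ℝ)
    (hq : q = 1 - p) (hω : ω = p / q)
    (hτ₁ : τ₁ = max 1 ω) (hτ₂ : τ₂ = min 1 ω)
    (hθ : θ = ((τ₂ ^ i₀ - τ₁ ^ i₀) / (1 - s) - 2 * p * (τ₂ ^ (i₀ - 1) - τ₁ ^ (i₀ - 1))) /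
      (q * (τ₂ - τ₁)))
    (hφ₂ : φ₂ = (θ - Real.sqrt (θ ^ 2 - 4 * ω ^ i₀)) / 2) :
    (∀ k : ℕ, Summable (fun m : ℕ => PC p s i₀ m (k * i₀))) ∧
    (∑' m : ℕ, PC p s i₀ m 0) = 1 / (1 + ω ^ i₀ - φ₂) ∧
    ∀ k : ℕ, 2 ≤ k →
      s * (∑' m : ℕ, PC p s i₀ m (k * i₀)) =
        s * (1 - ω ^ i₀) * φ₂ ^ (k - 1) / ((1 - s) * (q - p) * (1 + ω ^ i₀ - φ₂)) := by
  subst hq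
  have hq0 : (0:ℝ) < 1 - p := by linarith
  have hr1 : (1 - p) * ω = p := by rw [hω]; field_simp
  have hω0 : 0 < ω := by rw [hω]; exact div_pos hp hq0
  have hωne : ω ≠ 1 := by intro h; rw [h, mul_one] at hr1; exact hp2 (by linarith)
  have h2p : (1 - p) - p ≠ 0 := by intro h; exact hp2 (by linarith)
  have hu0 : 0 < ω ^ i₀ := pow_pos hω0 i₀
  have hucase : (ω < 1 ∧ ω ^ i₀ < 1 ∧ 0 < (1 - p) - p)
      ∨ (1 < ω ∧ 1 < ω ^ i₀ ∧ (1 - p) - p < 0) := by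
    rcases lt_or_gt_of_ne hωne with h | h
    · exact Or.inl ⟨h, pow_lt_one₀ hω0.le h (by omega), by nlinarith⟩
    · exact Or.inr ⟨h, one_lt_pow₀ h (by omega), by nlinarith⟩
  have hune : (ω:ℝ) ^ i₀ ≠ 1 := by
    rcases hucase with ⟨-, h, -⟩ | ⟨-, h, -⟩ <;> exact by linarith
  have hs1' : (0:ℝ) < 1 - s := by linarith
  have hs1ne : (1:ℝ) - s ≠ 0 := ne_of_gt hs1'
  have hpow_succ : ω ^ i₀ = ω ^ (i₀ - 1) * ω := by
    rw [← pow_succ]; congr 1; omega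
  have hpw : p * ω ^ (i₀ - 1) = (1 - p) * ω ^ i₀ := by
    rw [hpow_succ]; linear_combination (-(ω ^ (i₀ - 1))) * hr1
  -- the θ relation
  have hθD : θ * (p - (1 - p)) = (ω ^ i₀ - 1) / (1 - s) - 2 * (1 - p) * ω ^ i₀ + 2 * p := by
    rcases lt_or_gt_of_ne hωne with hlt | hgt
    · rw [hτ₁, hτ₂, max_eq_left hlt.le, min_eq_right hlt.le] at hθ
      have hden : (1 - p) * (ω - 1) ≠ 0 :=
        mul_ne_zero (by linarith) (sub_ne_zero.mpr hωne)
      have hθD' : θ * ((1 - p) * (ω - 1))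
          = (ω ^ i₀ - 1 ^ i₀) / (1 - s) - 2 * p * (ω ^ (i₀ - 1) - 1 ^ (i₀ - 1)) := by
        rw [hθ, div_mul_cancel₀ _ hden]
      rw [one_pow, one_pow] at hθD'
      have hdenid : (1 - p) * (ω - 1) = p - (1 - p) := by linear_combination hr1
      linear_combination hθD' + (- θ) * hdenid + (-2) * hpw
    · rw [hτ₁, hτ₂, max_eq_right hgt.le, min_eq_left hgt.le] at hθ
      have hden : (1 - p) * (1 - ω) ≠ 0 :=
        mul_ne_zero (by linarith) (sub_ne_zero.mpr (Ne.symm hωne))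
      have hθD' : θ * ((1 - p) * (1 - ω))
          = (1 ^ i₀ - ω ^ i₀) / (1 - s) - 2 * p * (1 ^ (i₀ - 1) - ω ^ (i₀ - 1)) := by
        rw [hθ, div_mul_cancel₀ _ hden]
      rw [one_pow, one_pow] at hθD'
      have hdenid : (1 - p) * (1 - ω) = (1 - p) - p := by linear_combination (-1) * hr1
      linear_combination (-1) * hθD' + θ * hdenid + (-2) * hpw
  -- θ > 1 + ω^i₀
  have hid : (ω ^ i₀ - 1) - 2 * (1 - p) * ω ^ i₀ + 2 * p
      = (1 + ω ^ i₀) * (p - (1 - p)) := by ring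
  have hθ2 : 1 + ω ^ i₀ < θ := by
    rcases hucase with ⟨-, hu1, hpp⟩ | ⟨-, hu1, hpp⟩
    · have hfrac : (ω ^ i₀ - 1) / (1 - s) < ω ^ i₀ - 1 := by
        rw [div_lt_iff₀ hs1']; nlinarith
      have hkey : θ * (p - (1 - p)) < (1 + ω ^ i₀) * (p - (1 - p)) := by
        rw [hθD]; linarith [hid]
      by_contra hcon
      push_neg at hcon
      have h3 := mul_le_mul_of_nonpos_right hcon (by linarith : p - (1 - p) ≤ 0)
      linarith
    · have hfrac : ω ^ i₀ - 1 < (ω ^ i₀ - 1) / (1 - s) := by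
        rw [lt_div_iff₀ hs1']; nlinarith
      have hkey : (1 + ω ^ i₀) * (p - (1 - p)) < θ * (p - (1 - p)) := by
        rw [hθD]; linarith [hid]
      by_contra hcon
      push_neg at hcon
      have h3 := mul_le_mul_of_nonneg_right hcon (by linarith : 0 ≤ p - (1 - p))
      linarith
  have hd2 : 0 ≤ θ ^ 2 - 4 * ω ^ i₀ := by nlinarith [sq_nonneg (1 - ω ^ i₀)]
  have hdd : Real.sqrt (θ ^ 2 - 4 * ω ^ i₀) ^ 2 = θ ^ 2 - 4 * ω ^ i₀ := Real.sq_sqrt hd2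
  have hdnn : 0 ≤ Real.sqrt (θ ^ 2 - 4 * ω ^ i₀) := Real.sqrt_nonneg _
  have hquad : φ₂ ^ 2 = θ * φ₂ - ω ^ i₀ := by
    rw [hφ₂]; linear_combination (1/4 : ℝ) * hdd
  have hθpos : 0 < θ := by nlinarith
  have hdltθ : Real.sqrt (θ ^ 2 - 4 * ω ^ i₀) < θ := by nlinarith
  have hφpos : 0 < φ₂ := by rw [hφ₂]; linarith
  have hφlt1 : φ₂ < 1 := by
    have hlt : θ - 2 < Real.sqrt (θ ^ 2 - 4 * ω ^ i₀) := by
      rcases lt_or_ge θ 2 with h | h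
      · linarith
      · nlinarith
    rw [hφ₂]; linarith
  have hK : 0 < 1 + ω ^ i₀ - φ₂ := by nlinarith
  have hKne : 1 + ω ^ i₀ - φ₂ ≠ 0 := ne_of_gt hK
  -- the constants of the closed-form solution
  set c : ℝ := 1 / (((1 - p) - p) * (1 + ω ^ i₀ - φ₂)) with hcdef
  set V : ℝ := c * φ₂ * (1 - ω ^ i₀) / (1 - s) with hVdef
  set G0 : ℝ := 1 / (1 + ω ^ i₀ - φ₂) with hG0def
  have hRN : c * ((1 - p) - p) * (1 + ω ^ i₀ - φ₂) = 1 := by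
    rw [hcdef]; field_simp
  have hsV : (1 - s) * V = c * φ₂ * (1 - ω ^ i₀) := by
    rw [hVdef]; field_simp
  have hθD2 : θ * (p - (1 - p)) * (1 - s)
      = (ω ^ i₀ - 1) - (2 * (1 - p) * ω ^ i₀ - 2 * p) * (1 - s) := by
    rw [hθD]; field_simp; ring
  have hID : φ₂ * (ω ^ i₀ - 1)
      = (1 - s) * ((p - (1 - p)) * (ω ^ i₀ + φ₂ ^ 2) + 2 * φ₂ * ((1 - p) * ω ^ i₀ - p)) := by
    linear_combination (-φ₂) * hθD2 + (-(1 - s) * (p - (1 - p))) * hquad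
  have hcpos : 0 < (1 - p) - p → 0 < c := fun hpp => by
    rw [hcdef]; exact one_div_pos.mpr (mul_pos hpp hK)
  have hcneg : (1 - p) - p < 0 → c < 0 := fun hpp => by
    rw [hcdef]; exact one_div_neg.mpr (mul_neg_of_neg_of_pos hpp hK)
  have hcω : 0 ≤ c * (1 - ω) := by
    rcases hucase with ⟨ho, -, hpp⟩ | ⟨ho, -, hpp⟩
    · exact mul_nonneg (hcpos hpp).le (by linarith)
    · have h1 := mul_pos (neg_pos.mpr (hcneg hpp)) (by linarith : (0:ℝ) < ω - 1)
      nlinarith [h1]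
  have hcu : 0 ≤ c * (1 - ω ^ i₀) := by
    rcases hucase with ⟨-, hu1, hpp⟩ | ⟨-, hu1, hpp⟩
    · exact mul_nonneg (hcpos hpp).le (by linarith)
    · have h1 := mul_pos (neg_pos.mpr (hcneg hpp)) (by linarith : (0:ℝ) < ω ^ i₀ - 1)
      nlinarith [h1]
  have hVnn : 0 ≤ V := by
    rw [hVdef, div_nonneg_iff]
    left
    refine ⟨?_, by linarith⟩
    have h1 := mul_nonneg hφpos.le hcu
    nlinarith [h1]
  have hG0nn : 0 ≤ G0 := by rw [hG0def]; positivity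
  -- Ghat facts
  have hrec := Ghat_rec p s ω (ω ^ i₀) φ₂ c V G0 i₀ hi₀ hr1 rfl hRN hsV hs1ne hID
  have hnn := Ghat_nonneg ω (ω ^ i₀) φ₂ c V G0 i₀ hi₀ hω0 hωne rfl hφpos.le hcω hVnn hG0nn
  have hbd := Ghat_le_bound ω (ω ^ i₀) φ₂ c V G0 i₀ hi₀ hω0 hωne rfl hφpos.le hφlt1.le hcω
    hs.le hs1 hsV
  have hG0c : G0 = (1 - p) * (c * (1 - ω ^ 1)) := by
    rw [hG0def, hcdef, pow_one]
    field_simp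
    linear_combination (1 + ω ^ i₀ - φ₂) * hr1 + (φ₂ - ω ^ i₀) * hr1
  have hGhat0eq : Ghat ω (ω ^ i₀) φ₂ c V G0 i₀ 0
      = (1 - p) * cC s i₀ 1 * Ghat ω (ω ^ i₀) φ₂ c V G0 i₀ 1 := by
    rw [Ghat_zero, Ghat_I _ _ _ _ _ _ _ le_rfl (by omega), cC_one s i₀ hi₀, hG0c]
    ring
  -- the true Green function
  have hGrec := fun j => G_rec_eq p s i₀ hp hp1 hp2 hs.le hs1.le j
  have hG0e := G_zero_eq p s i₀ hp hp1 hp2 hs.le hs1.le hi₀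
  have hGle : ∀ j, (∑' m : ℕ, PC p s i₀ m j) ≤ Ghat ω (ω ^ i₀) φ₂ c V G0 i₀ j := by
    intro j
    exact Summable.tsum_le_of_sum_range_le (PC_summable p s i₀ hp hp1 hp2 hs.le hs1.le j)
      (fun M => partial_le_G p s i₀ hp hp1 hs1.le hi₀ _ hnn hGhat0eq hrec M j)
  have hGnn : ∀ j, 0 ≤ (∑' m : ℕ, PC p s i₀ m j) := by
    intro j
    exact tsum_nonneg (fun m => PC_nonneg p s i₀ hp.le hp1.le hs1.le m j)
  -- the difference
  set H : ℕ → ℝ := fun j => Ghat ω (ω ^ i₀) φ₂ c V G0 i₀ j - (∑' m : ℕ, PC p s i₀ m j)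
    with hHdef
  have hH0 : H 0 = (1 - p) * cC s i₀ 1 * H 1 := by
    simp only [hHdef]; linear_combination hGhat0eq - hG0e
  have hHrec : ∀ j : ℕ, H (j + 1) = p * cC s i₀ j * H j
      + (1 - p) * cC s i₀ (j + 2) * H (j + 2) := by
    intro j
    simp only [hHdef]
    linear_combination (hrec j) - (hGrec j)
  have hHnn : ∀ j, 0 ≤ H j := fun j => sub_nonneg.mpr (hGle j)
  have hdiv : Filter.Tendsto (fun j : ℕ => j / i₀ - 1) Filter.atTop Filter.atTop := by
    apply Filter.tendsto_atTop_atTop.mpr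
    intro b
    refine ⟨(b + 1) * i₀ + i₀, fun j hj => ?_⟩
    have h1 : b + 1 ≤ j / i₀ := (Nat.le_div_iff_mul_le (by omega)).mpr (by omega)
    omega
  have hbound_to : Filter.Tendsto
      (fun j : ℕ => (c * (1 - ω ^ i₀) / (1 - s)) * φ₂ ^ (j / i₀ - 1))
      Filter.atTop (nhds 0) := by
    have h1 := (tendsto_pow_atTop_nhds_zero_of_lt_one hφpos.le hφlt1).comp hdiv
    have h2 := h1.const_mul (c * (1 - ω ^ i₀) / (1 - s))
    simpa [Function.comp] using h2
  have hGhat_to : Filter.Tendsto (fun j => Ghat ω (ω ^ i₀) φ₂ c V G0 i₀ j)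
      Filter.atTop (nhds 0) := by
    refine squeeze_zero' (Filter.Eventually.of_forall hnn) ?_ hbound_to
    refine Filter.eventually_atTop.mpr ⟨i₀ + 1, fun j hj => ?_⟩
    exact hbd j (by omega)
  have hH_to : Filter.Tendsto H Filter.atTop (nhds 0) := by
    refine squeeze_zero' (Filter.Eventually.of_forall hHnn)
      (Filter.Eventually.of_forall (fun j => ?_)) hGhat_to
    simp only [hHdef]
    linarith [hGnn j]
  have hHzero := H_eq_zero p s i₀ hp hp1 hs.le hs1.le H hH0 hHrec hHnn hH_to
  have hGG : ∀ j, (∑' m : ℕ, PC p s i₀ m j) = Ghat ω (ω ^ i₀) φ₂ c V G0 i₀ j := by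
    intro j
    have := hHzero j
    simp only [hHdef] at this
    linarith
  refine ⟨fun k => PC_summable p s i₀ hp hp1 hp2 hs.le hs1.le _, ?_, ?_⟩
  · rw [hGG 0, Ghat_zero]
  · intro k hk
    have h1 : (∑' m : ℕ, PC p s i₀ m (k * i₀)) = V * φ₂ ^ (k - 2) := by
      rw [hGG, Nat.mul_comm k i₀]
      exact Ghat_bar _ _ _ _ _ _ (by omega) hk
    have hDne : (1 - s) * ((1 - p) - p) * (1 + ω ^ i₀ - φ₂) ≠ 0 :=
      mul_ne_zero (mul_ne_zero hs1ne h2p) hKne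
    rw [h1, show k - 1 = (k - 2) + 1 from by omega, pow_succ, eq_div_iff hDne]
    linear_combination (s * φ₂ ^ (k - 2) * ((1 - p) - p) * (1 + ω ^ i₀ - φ₂)) * hsV
      + (s * φ₂ ^ (k - 2) * φ₂ * (1 - ω ^ i₀)) * hRN
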